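/- There is an absolute constant C > 0 such that for every weight w ∈ A₂^d and every dyadic interval J, (1/|J|) Σ_{I∈D(J)} ((m_{I⁺}w − m_{I⁻}w)/m_I w)² · |I| · m_I w⁻¹ ≤ C · ‖w‖_{A₂^d} · m_J w⁻¹. -/

import Mathlib

open MeasureTheory Set

noncomputable section

/-- The dyadic interval `[k 2^{-j}, (k+1) 2^{-j})`, indexed by `I = (j, k)`. -/
def dyadicI (I : ℤ × ℤ) : Set ℝ :=
  Set.Ico ((I.2 : ℝ) * 2 ^ (-I.1)) (((I.2 : ℝ) + 1) * 2 ^ (-I.1))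

/-- The length `|I| = 2^{-j}` of the dyadic interval indexed by `I = (j, k)`. -/
def len (I : ℤ × ℤ) : ℝ := 2 ^ (-I.1)

/-- The left half `I⁺` of the dyadic interval `I`. -/
def leftHalf (I : ℤ × ℤ) : ℤ × ℤ := (I.1 + 1, 2 * I.2)

/-- The right half `I⁻` of the dyadic interval `I`. -/
def rightHalf (I : ℤ × ℤ) : ℤ × ℤ := (I.1 + 1, 2 * I.2 + 1)

/-- The average `m_I f = (1/|I|) ∫_I f`. -/
def avg (f : ℝ → ℝ) (I : ℤ × ℤ) : ℝ := (len I)⁻¹ * ∫ x in dyadicI I, f x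

/-- The Haar function `h_I = |I|^{-1/2} (χ_{I⁺} - χ_{I⁻})`. -/
def haar (I : ℤ × ℤ) (x : ℝ) : ℝ :=
  (Real.sqrt (len I))⁻¹ *
    ((dyadicI (leftHalf I)).indicator (fun _ => (1 : ℝ)) x -
      (dyadicI (rightHalf I)).indicator (fun _ => (1 : ℝ)) x)

/-- The Haar coefficient `b_I = ⟨b, h_I⟩`. -/
def haarCoef (b : ℝ → ℝ) (I : ℤ × ℤ) : ℝ := ∫ x, b x * haar I x

/-- The dyadic BMO norm of `b`. -/
def bmoNorm (b : ℝ → ℝ) : ℝ :=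
  Real.sqrt (⨆ I : ℤ × ℤ, (len I)⁻¹ * ∫ x in dyadicI I, (b x - avg b I) ^ 2)

/-- The `A₂^d` characteristic `‖w‖_{A₂^d} = sup_I (m_I w)(m_I w⁻¹)`. -/
def A2const (w : ℝ → ℝ) : ℝ :=
  ⨆ I : ℤ × ℤ, avg w I * avg (fun x => (w x)⁻¹) I

/-
With `v = w⁻¹` and `Q = ‖w‖_{A₂^d}`, the Bellman function `ψ(I) = 4Q|I|(m_I v - (m_I w)⁻¹)` is
nonnegative (by Cauchy–Schwarz `1 ≤ m_I w · m_I v`) and its dyadic excess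
`ψ(I) - ψ(I⁺) - ψ(I⁻)` dominates the `I`-th summand: the `m_I v` parts cancel, and what remains is
the convexity gap `1/a + 1/b - 4/(a+b) = (a-b)²/(ab(a+b))` of `t ↦ 1/t` at the averages
`a = m_{I⁺}w`, `b = m_{I⁻}w`, which beats the summand because `a m_{I⁺}v ≤ Q` and `b m_{I⁻}v ≤ Q`.
Summing the excesses over any finite family of dyadic subintervals of `J` telescopes to at most
`ψ(J) ≤ 4Q|J| m_J v`.
-/

lemma len_pos (I : ℤ × ℤ) : 0 < len I := zpow_pos two_pos _

lemma dyadicI_eq (I : ℤ × ℤ) : dyadicI I = Ico (I.2 * len I) ((I.2 + 1) * len I) := rfl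

lemma len_leftHalf (I : ℤ × ℤ) : len (leftHalf I) = len I / 2 := by
  simp only [len, leftHalf, neg_add, zpow_add₀ (two_ne_zero (α := ℝ)), zpow_neg_one,
    div_eq_mul_inv]

lemma len_rightHalf (I : ℤ × ℤ) : len (rightHalf I) = len I / 2 := len_leftHalf I

lemma len_eq_pow_mul_len {I K : ℤ × ℤ} {n : ℕ} (h : I.1 = K.1 + n) :
    len K = 2 ^ n * len I := by
  rw [len, len, h, ← zpow_natCast, ← zpow_add₀ two_ne_zero]
  ring_nf

lemma dyadicI_leftHalf (I : ℤ × ℤ) :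
    dyadicI (leftHalf I) = Ico (I.2 * len I) ((I.2 + 1 / 2) * len I) := by
  rw [dyadicI_eq, len_leftHalf, leftHalf]
  push_cast
  ring_nf

lemma dyadicI_rightHalf (I : ℤ × ℤ) :
    dyadicI (rightHalf I) = Ico ((I.2 + 1 / 2) * len I) ((I.2 + 1) * len I) := by
  rw [dyadicI_eq, len_rightHalf, rightHalf]
  push_cast
  ring_nf

lemma dyadicI_union_halves (I : ℤ × ℤ) :
    dyadicI (leftHalf I) ∪ dyadicI (rightHalf I) = dyadicI I := by
  have := len_pos I
  rw [dyadicI_leftHalf, dyadicI_rightHalf, dyadicI_eq]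
  exact Ico_union_Ico_eq_Ico (by gcongr; norm_num) (by gcongr; norm_num)

lemma disjoint_dyadicI_halves (I : ℤ × ℤ) :
    Disjoint (dyadicI (leftHalf I)) (dyadicI (rightHalf I)) := by
  rw [dyadicI_leftHalf, dyadicI_rightHalf]
  exact Ico_disjoint_Ico_same

lemma volume_dyadicI (I : ℤ × ℤ) : volume (dyadicI I) = ENNReal.ofReal (len I) := by
  rw [dyadicI_eq, Real.volume_Ico]
  ring_nf

lemma len_le_of_dyadicI_subset {I K : ℤ × ℤ} (h : dyadicI I ⊆ dyadicI K) : len I ≤ len K :=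
  (ENNReal.ofReal_le_ofReal_iff (len_pos K).le).1 <| by
    simpa only [volume_dyadicI] using measure_mono (μ := volume) h

lemma le_of_dyadicI_subset {I K : ℤ × ℤ} (h : dyadicI I ⊆ dyadicI K) : K.1 ≤ I.1 := by
  have := (zpow_le_zpow_iff_right₀ (one_lt_two (α := ℝ))).1 (len_le_of_dyadicI_subset h)
  omega

lemma dyadicI_subset_iff {I K : ℤ × ℤ} {n : ℕ} (h : I.1 = K.1 + n) :
    dyadicI I ⊆ dyadicI K ↔ K.2 * 2 ^ n ≤ I.2 ∧ I.2 + 1 ≤ (K.2 + 1) * 2 ^ n := by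
  have hI := len_pos I
  rw [dyadicI_eq, dyadicI_eq, Ico_subset_Ico_iff (by nlinarith), len_eq_pow_mul_len h,
    ← mul_assoc, ← mul_assoc, mul_le_mul_iff_left₀ hI, mul_le_mul_iff_left₀ hI]
  norm_cast

lemma dyadicI_subset_halves {I K : ℤ × ℤ} (h : dyadicI I ⊆ dyadicI K) (hne : I ≠ K) :
    dyadicI I ⊆ dyadicI (leftHalf K) ∨ dyadicI I ⊆ dyadicI (rightHalf K) := by
  obtain ⟨n, hn⟩ := Int.le.dest (le_of_dyadicI_subset h)
  cases n with
  | zero =>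
    rw [dyadicI_subset_iff hn.symm] at h
    exact absurd (Prod.ext (by simpa using hn.symm) (by omega)) hne
  | succ m =>
    have hm : I.1 = (leftHalf K).1 + m := by simp only [leftHalf]; omega
    rw [dyadicI_subset_iff (n := m + 1) (by omega)] at h
    rw [dyadicI_subset_iff hm, dyadicI_subset_iff (K := rightHalf K) hm]
    simp only [leftHalf, rightHalf, pow_succ] at h ⊢
    generalize (2 : ℤ) ^ m = P at h ⊢
    grind

theorem sum_le_of_le_sub_halves (ψ term : ℤ × ℤ → ℝ) (hψ : ∀ I, 0 ≤ ψ I)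
    (hterm : ∀ I, 0 ≤ term I) (hexcess : ∀ I, term I ≤ ψ I - ψ (leftHalf I) - ψ (rightHalf I))
    {K : ℤ × ℤ} {S : Finset (ℤ × ℤ)} (hS : ∀ I ∈ S, dyadicI I ⊆ dyadicI K) :
    ∑ I ∈ S, term I ≤ ψ K := by
  obtain ⟨d, hd⟩ : ∃ d : ℕ, ∀ I ∈ S, I.1 < K.1 + d :=
    ⟨(S.sup fun I => (I.1 - K.1).toNat) + 1, fun I hI => by
      have := Finset.le_sup (f := fun I => (I.1 - K.1).toNat) hI
      omega⟩
  induction d generalizing K S with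
  | zero =>
    have hSK : S = ∅ := Finset.eq_empty_of_forall_notMem fun I hI => by
      have := le_of_dyadicI_subset (hS I hI)
      have := hd I hI
      omega
    simpa [hSK] using hψ K
  | succ d ih =>
    classical
    set T := S.filter (· ≠ K)
    have hT : ∀ I ∈ T, I ∈ S ∧ I ≠ K := fun I hI => Finset.mem_filter.1 hI
    have hleft : ∑ I ∈ T.filter (fun I => dyadicI I ⊆ dyadicI (leftHalf K)), term I
        ≤ ψ (leftHalf K) := by
      refine ih (fun I hI => (Finset.mem_filter.1 hI).2) fun I hI => ?_
      have := hd I (hT I (Finset.mem_filter.1 hI).1).1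
      simp only [leftHalf]
      omega
    have hright : ∑ I ∈ T.filter (fun I => ¬dyadicI I ⊆ dyadicI (leftHalf K)), term I
        ≤ ψ (rightHalf K) := by
      refine ih (fun I hI => ?_) fun I hI => ?_
      · obtain ⟨hIT, hnotleft⟩ := Finset.mem_filter.1 hI
        obtain ⟨hIS, hne⟩ := hT I hIT
        exact (dyadicI_subset_halves (hS I hIS) hne).resolve_left hnotleft
      · have := hd I (hT I (Finset.mem_filter.1 hI).1).1
        simp only [rightHalf]
        omega
    have htop : ∑ I ∈ S.filter (· = K), term I ≤ ψ K - ψ (leftHalf K) - ψ (rightHalf K) := by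
      rw [Finset.filter_eq' S K]
      split_ifs
      · simpa using hexcess K
      · simpa using (hterm K).trans (hexcess K)
    rw [← Finset.sum_filter_add_sum_filter_not S (· = K),
      ← Finset.sum_filter_add_sum_filter_not T (fun I => dyadicI I ⊆ dyadicI (leftHalf K))]
    linarith

lemma measurableSet_dyadicI (I : ℤ × ℤ) : MeasurableSet (dyadicI I) := measurableSet_Ico

lemma MeasureTheory.LocallyIntegrable.integrableOn_dyadicI {f : ℝ → ℝ}
    (hf : LocallyIntegrable f volume) (I : ℤ × ℤ) : IntegrableOn f (dyadicI I) volume :=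
  (hf.integrableOn_isCompact isCompact_Icc).mono_set Ico_subset_Icc_self

lemma setIntegral_dyadicI_eq_len_mul_avg (f : ℝ → ℝ) (I : ℤ × ℤ) :
    ∫ x in dyadicI I, f x = len I * avg f I := by
  rw [avg, mul_inv_cancel_left₀ (len_pos I).ne']

lemma avg_pos {f : ℝ → ℝ} (hf : ∀ x, 0 < f x) {I : ℤ × ℤ}
    (hfI : IntegrableOn f (dyadicI I) volume) : 0 < avg f I := by
  refine mul_pos (inv_pos.2 (len_pos I)) ?_
  rw [setIntegral_pos_iff_support_of_nonneg_ae (.of_forall fun x => (hf x).le) hfI,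
    inter_eq_right.2 fun x _ => Function.mem_support.2 (hf x).ne', volume_dyadicI]
  exact ENNReal.ofReal_pos.2 (len_pos I)

lemma avg_eq_add_halves {f : ℝ → ℝ} {I : ℤ × ℤ} (hfI : IntegrableOn f (dyadicI I) volume) :
    avg f I = (avg f (leftHalf I) + avg f (rightHalf I)) / 2 := by
  rw [← dyadicI_union_halves] at hfI
  have hsplit := setIntegral_union (disjoint_dyadicI_halves I) (measurableSet_dyadicI _)
    (hfI.mono_set subset_union_left) (hfI.mono_set subset_union_right)
  rw [dyadicI_union_halves, setIntegral_dyadicI_eq_len_mul_avg,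
    setIntegral_dyadicI_eq_len_mul_avg, setIntegral_dyadicI_eq_len_mul_avg, len_leftHalf,
    len_rightHalf] at hsplit
  refine mul_left_cancel₀ (len_pos I).ne' ?_
  linarith

lemma one_le_avg_mul_avg_inv {w : ℝ → ℝ} (hw : ∀ x, 0 < w x) {I : ℤ × ℤ}
    (hwI : IntegrableOn w (dyadicI I) volume)
    (hvI : IntegrableOn (fun x => (w x)⁻¹) (dyadicI I) volume) :
    1 ≤ avg w I * avg (fun x => (w x)⁻¹) I := by
  have hu : 0 < avg w I := avg_pos hw hwI
  have hL := len_pos I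
  -- integrate the pointwise AM–GM inequality `2u ≤ w + u² w⁻¹` at `u = m_I w`
  have hmono : ∫ _ in dyadicI I, 2 * avg w I
      ≤ ∫ x in dyadicI I, (w x + avg w I ^ 2 * (w x)⁻¹) := by
    refine setIntegral_mono_on (integrableOn_const (by simp [volume_dyadicI]))
      (hwI.add (hvI.const_mul _)) (measurableSet_dyadicI I) fun x _ => ?_
    have hgap : w x + avg w I ^ 2 * (w x)⁻¹ - 2 * avg w I = (w x - avg w I) ^ 2 / w x := by
      have := (hw x).ne'
      field_simp
      ring
    linarith [div_nonneg (sq_nonneg (w x - avg w I)) (hw x).le]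
  rw [setIntegral_const, integral_add hwI (hvI.const_mul _), integral_const_mul,
    measureReal_def, volume_dyadicI, ENNReal.toReal_ofReal hL.le, smul_eq_mul,
    setIntegral_dyadicI_eq_len_mul_avg, setIntegral_dyadicI_eq_len_mul_avg] at hmono
  refine le_of_mul_le_mul_left ?_ (mul_pos hL hu)
  linarith

/-- `a⁻¹ + b⁻¹ - 4/(a+b) = (a-b)²/(ab(a+b))`, and `(p+q)ab ≤ Q(a+b)`. -/
lemma sq_div_mul_le_inv_gap {a b p q Q : ℝ} (ha : 0 < a) (hb : 0 < b) (hap : a * p ≤ Q)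
    (hbq : b * q ≤ Q) :
    ((a - b) / ((a + b) / 2)) ^ 2 * ((p + q) / 2) ≤ 2 * Q * (a⁻¹ + b⁻¹ - 4 / (a + b)) := by
  have hab : 0 < a + b := add_pos ha hb
  have hpq : (p + q) * (a * b) ≤ Q * (a + b) := by nlinarith
  have hlhs : ((a - b) / ((a + b) / 2)) ^ 2 * ((p + q) / 2)
      = 2 * (a - b) ^ 2 * ((p + q) * (a * b)) / ((a + b) ^ 2 * (a * b)) := by
    field_simp
  have hrhs : 2 * Q * (a⁻¹ + b⁻¹ - 4 / (a + b))
      = 2 * (a - b) ^ 2 * (Q * (a + b)) / ((a + b) ^ 2 * (a * b)) := by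
    field_simp
    ring
  rw [hlhs, hrhs]
  gcongr

def bellman (w : ℝ → ℝ) (Q : ℝ) (I : ℤ × ℤ) : ℝ :=
  4 * Q * len I * (avg (fun x => (w x)⁻¹) I - (avg w I)⁻¹)

section Bellman

variable {w : ℝ → ℝ} {Q : ℝ} (hw : ∀ x, 0 < w x) (hwloc : LocallyIntegrable w volume)
  (hvloc : LocallyIntegrable (fun x => (w x)⁻¹) volume)
  (hQ : ∀ I, avg w I * avg (fun x => (w x)⁻¹) I ≤ Q)
include hw hwloc hvloc hQ

lemma bellman_nonneg (I : ℤ × ℤ) : 0 ≤ bellman w Q I := by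
  have hCS := one_le_avg_mul_avg_inv hw (hwloc.integrableOn_dyadicI I)
    (hvloc.integrableOn_dyadicI I)
  have hu := avg_pos hw (hwloc.integrableOn_dyadicI I)
  have hinv : (avg w I)⁻¹ ≤ avg (fun x => (w x)⁻¹) I := by
    rwa [inv_le_iff_one_le_mul₀ hu, mul_comm]
  have := len_pos I
  have : 0 ≤ Q := zero_le_one.trans (hCS.trans (hQ I))
  unfold bellman
  have := sub_nonneg.2 hinv
  positivity

lemma sq_div_mul_le_bellman_sub_halves (I : ℤ × ℤ) :
    ((avg w (leftHalf I) - avg w (rightHalf I)) / avg w I) ^ 2 * len I *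
        avg (fun x => (w x)⁻¹) I
      ≤ bellman w Q I - bellman w Q (leftHalf I) - bellman w Q (rightHalf I) := by
  have hgap := sq_div_mul_le_inv_gap (avg_pos hw (hwloc.integrableOn_dyadicI (leftHalf I)))
    (avg_pos hw (hwloc.integrableOn_dyadicI (rightHalf I))) (hQ (leftHalf I)) (hQ (rightHalf I))
  unfold bellman
  rw [avg_eq_add_halves (hwloc.integrableOn_dyadicI I),
    avg_eq_add_halves (hvloc.integrableOn_dyadicI I), len_leftHalf, len_rightHalf]
  calc _ = len I * (((avg w (leftHalf I) - avg w (rightHalf I))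
          / ((avg w (leftHalf I) + avg w (rightHalf I)) / 2)) ^ 2
          * ((avg (fun x => (w x)⁻¹) (leftHalf I)
            + avg (fun x => (w x)⁻¹) (rightHalf I)) / 2)) := by
        ring
    _ ≤ len I * (2 * Q * ((avg w (leftHalf I))⁻¹ + (avg w (rightHalf I))⁻¹
          - 4 / (avg w (leftHalf I) + avg w (rightHalf I)))) := by
        gcongr
        exact (len_pos I).le
    _ = _ := by
        rw [inv_div]
        ring

theorem sum_le_bellman {J : ℤ × ℤ} {S : Finset (ℤ × ℤ)} (hS : ∀ I ∈ S, dyadicI I ⊆ dyadicI J) :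
    ∑ I ∈ S, ((avg w (leftHalf I) - avg w (rightHalf I)) / avg w I) ^ 2 * len I *
        avg (fun x => (w x)⁻¹) I ≤ bellman w Q J :=
  sum_le_of_le_sub_halves _ _ (bellman_nonneg hw hwloc hvloc hQ)
    (fun I => by
      have := avg_pos (fun x => inv_pos.2 (hw x)) (hvloc.integrableOn_dyadicI I)
      have := len_pos I
      positivity)
    (sq_div_mul_le_bellman_sub_halves hw hwloc hvloc hQ) hS

end Bellman

/-- Proposition 3: for `w ∈ A₂^d`,
`(1/|J|) Σ_{I∈D(J)} ((m_{I⁺}w − m_{I⁻}w)/m_I w)² |I| m_I w⁻¹ ≤ C ‖w‖_{A₂^d} m_J w⁻¹`. -/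
theorem prop_sum2
    : ∃ C : ℝ, 0 < C ∧ ∀ (w : ℝ → ℝ), (∀ x, 0 < w x) →
      LocallyIntegrable w volume →
      LocallyIntegrable (fun x => (w x)⁻¹) volume →
      BddAbove (Set.range fun I : ℤ × ℤ => avg w I * avg (fun x => (w x)⁻¹) I) →
      ∀ (J : ℤ × ℤ) (S : Finset (ℤ × ℤ)), (∀ I ∈ S, dyadicI I ⊆ dyadicI J) →
        (len J)⁻¹ * ∑ I ∈ S,
            ((avg w (leftHalf I) - avg w (rightHalf I)) / avg w I) ^ 2 * len I *
              avg (fun x => (w x)⁻¹) I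
          ≤ C * A2const w * avg (fun x => (w x)⁻¹) J := by
  refine ⟨4, four_pos, fun w hw hwloc hvloc hbdd J S hS => ?_⟩
  have hQ : ∀ I, avg w I * avg (fun x => (w x)⁻¹) I ≤ A2const w := le_ciSup hbdd
  have hu := avg_pos hw (hwloc.integrableOn_dyadicI J)
  have hv := avg_pos (fun x => inv_pos.2 (hw x)) (hvloc.integrableOn_dyadicI J)
  have hQ0 : 0 ≤ A2const w := (mul_pos hu hv).le.trans (hQ J)
  have hL := len_pos J
  calc _ ≤ (len J)⁻¹ * bellman w (A2const w) J := by
        gcongr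
        exact sum_le_bellman hw hwloc hvloc hQ hS
    _ = 4 * A2const w * (avg (fun x => (w x)⁻¹) J - (avg w J)⁻¹) := by
        rw [bellman]
        field_simp
    _ ≤ 4 * A2const w * avg (fun x => (w x)⁻¹) J := by
        gcongr
        exact sub_le_self _ (inv_pos.2 hu).le
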